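/- If W^{(0)} = 0, 0 < η ≤ 1/λ̂_1, and W^{(t)} = W^{(t-1)} - (η/n) Fᵀ (F W^{(t-1)} - Y) for all t ≥ 1, then for every t ≥ 0 the training residual satisfies ‖F W^{(t)} - Y‖_F ≤ ‖Y - Ȳ‖_F + (1 - η λ̂_r)^t ‖Y‖_F. -/

import Mathlib

open Matrix Finset

/-- The Frobenius norm of a real matrix. -/
noncomputable def frobNorm {m k : Type*} [Fintype m] [Fintype k] (A : Matrix m k ℝ) : ℝ :=
  Real.sqrt (∑ i, ∑ j, (A i j) ^ 2)

/-- `U^r (U^r)ᵀ`, where `U^r` consists of the first `r` columns of `U`; i.e. the projection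
matrix onto the span of the first `r` columns of `U`. -/
noncomputable def topColsProj {n d : ℕ} (U : Matrix (Fin n) (Fin d) ℝ) (r : ℕ) :
    Matrix (Fin n) (Fin n) ℝ :=
  Matrix.of fun i j => ∑ k : Fin d, if (k : ℕ) < r then U i k * U j k else 0

/-!
With `F = U Σ Vᵀ` we get `F Fᵀ = U Σ² Uᵀ`, and the residual `Eₜ = F W⁽ᵗ⁾ - Y` obeys
`Eₜ₊₁ = (1 - (η/n) F Fᵀ) Eₜ`, `E₀ = -Y`. Since `f ↦ U diag(f) Uᵀ` is multiplicative when
`Uᵀ U = 1`, this gives `Eₜ = U diag(1 - (1 - η λ̂)ᵗ) Uᵀ Y - Y`. The directions `k ≥ r` have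
`λ̂ₖ = 0`, so `Eₜ = -(Y - Ȳ) - U diag(g) Uᵀ Y` with `gₖ = (1 - η λ̂ₖ)ᵗ` for `k < r` and `gₖ = 0`
otherwise, and `0 ≤ 1 - η λ̂ₖ ≤ 1 - η λ̂_r` for `k < r` because `η λ̂₁ ≤ 1`. Finally
`U diag(g) Uᵀ` enlarges no Frobenius norm by more than `maxₖ |gₖ|`: `U` is an isometry and
`U Uᵀ` an orthogonal projection.
-/

section Frobenius

variable {m k : Type*} [Fintype m] [Fintype k]

attribute [local instance] Matrix.frobeniusNormedAddCommGroup in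
theorem frobNorm_eq_norm (A : Matrix m k ℝ) : frobNorm A = ‖A‖ := by
  simp only [frobNorm, frobenius_norm_def, Real.norm_eq_abs, Real.rpow_two, sq_abs,
    Real.sqrt_eq_rpow]

theorem frobNorm_nonneg (A : Matrix m k ℝ) : 0 ≤ frobNorm A := Real.sqrt_nonneg _

attribute [local instance] Matrix.frobeniusNormedAddCommGroup in
theorem frobNorm_neg_sub_le (A B : Matrix m k ℝ) :
    frobNorm (-A - B) ≤ frobNorm A + frobNorm B := by
  simpa only [frobNorm_eq_norm, norm_neg] using norm_sub_le (-A) B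

theorem frobNorm_sq_eq_trace (A : Matrix m k ℝ) : frobNorm A ^ 2 = trace (Aᵀ * A) := by
  rw [frobNorm, Real.sq_sqrt (by positivity), Finset.sum_comm]
  simp only [trace, Matrix.diag, mul_apply, transpose_apply, sq]

theorem frobNorm_mul_of_transpose_mul_self_eq_one {n : Type*} [Fintype n] [DecidableEq k]
    {U : Matrix n k ℝ} (hU : Uᵀ * U = 1) (M : Matrix k m ℝ) :
    frobNorm (U * M) = frobNorm M := by
  have h : frobNorm (U * M) ^ 2 = frobNorm M ^ 2 := by
    rw [frobNorm_sq_eq_trace, frobNorm_sq_eq_trace, transpose_mul, Matrix.mul_assoc,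
      ← Matrix.mul_assoc Uᵀ, hU, Matrix.one_mul]
  exact (pow_left_inj₀ (frobNorm_nonneg _) (frobNorm_nonneg _) two_ne_zero).1 h

theorem frobNorm_mul_le_of_isSymm_of_isIdempotentElem [DecidableEq m] {P : Matrix m m ℝ}
    (hPt : P.IsSymm) (hPP : IsIdempotentElem P) (Y : Matrix m k ℝ) :
    frobNorm (P * Y) ≤ frobNorm Y := by
  have hpyth : frobNorm Y ^ 2 = frobNorm (P * Y) ^ 2 + frobNorm ((1 - P) * Y) ^ 2 := by
    simp only [frobNorm_sq_eq_trace, transpose_mul, transpose_sub, hPt.eq,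
      Matrix.mul_assoc, ← Matrix.mul_assoc P, hPP.eq, Matrix.sub_mul, Matrix.mul_sub,
      Matrix.one_mul, trace_sub]
    ring
  have hcmp : frobNorm (P * Y) ^ 2 ≤ frobNorm Y ^ 2 := by
    nlinarith [sq_nonneg (frobNorm ((1 - P) * Y))]
  exact (pow_le_pow_iff_left₀ (frobNorm_nonneg _) (frobNorm_nonneg _) two_ne_zero).1 hcmp

theorem frobNorm_diagonal_mul_le [DecidableEq m] {g : m → ℝ} {b : ℝ} (hb : 0 ≤ b)
    (hg : ∀ i, |g i| ≤ b) (Z : Matrix m k ℝ) :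
    frobNorm (diagonal g * Z) ≤ b * frobNorm Z := by
  rw [frobNorm, frobNorm, ← Real.sqrt_sq hb, ← Real.sqrt_mul (sq_nonneg b), Finset.mul_sum]
  refine Real.sqrt_le_sqrt (Finset.sum_le_sum fun i _ => ?_)
  rw [Finset.mul_sum]
  refine Finset.sum_le_sum fun j _ => ?_
  rw [diagonal_mul, mul_pow]
  exact mul_le_mul_of_nonneg_right (sq_le_sq' (abs_le.1 (hg i)).1 (abs_le.1 (hg i)).2)
    (sq_nonneg _)

end Frobenius

section ConjDiag

variable {R m k : Type*} [CommRing R] [Fintype k] [DecidableEq k]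

def conjDiag (U : Matrix m k R) : (k → R) →ₗ[R] Matrix m m R where
  toFun f := U * diagonal f * Uᵀ
  map_add' f g := by rw [← Matrix.add_mul, ← Matrix.mul_add, diagonal_add]; rfl
  map_smul' c f := by rw [diagonal_smul, Matrix.mul_smul, Matrix.smul_mul, RingHom.id_apply]

theorem conjDiag_apply (U : Matrix m k R) (f : k → R) : conjDiag U f = U * diagonal f * Uᵀ :=
  rfl

theorem mul_transpose_eq_conjDiag {m' : Type*} [Fintype m'] {U : Matrix m k R}
    {V : Matrix m' k R} {F : Matrix m m' R} {s : k → R} (hF : F = U * diagonal s * Vᵀ)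
    (hV : Vᵀ * V = 1) :
    F * Fᵀ = conjDiag U (s ^ 2) := by
  rw [hF, conjDiag_apply, sq]
  simp only [transpose_mul, transpose_transpose, diagonal_transpose, Matrix.mul_assoc,
    ← Matrix.mul_assoc Vᵀ, hV, Matrix.one_mul, ← Matrix.mul_assoc (diagonal s),
    diagonal_mul_diagonal]
  rfl

variable [Fintype m]

theorem conjDiag_mul_conjDiag {U : Matrix m k R} (hU : Uᵀ * U = 1) (f g : k → R) :
    conjDiag U f * conjDiag U g = conjDiag U (f * g) := by
  simp only [conjDiag_apply, Matrix.mul_assoc, ← Matrix.mul_assoc Uᵀ, hU, Matrix.one_mul,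
    ← Matrix.mul_assoc (diagonal f), diagonal_mul_diagonal]
  rfl

theorem residual_eq_conjDiag {c : Type*} {U : Matrix m k R} (hU : Uᵀ * U = 1)
    (lam : k → R) (Y : Matrix m c R) {E : ℕ → Matrix m c R} (h0 : E 0 = -Y)
    (hstep : ∀ t, E (t + 1) = E t - conjDiag U lam * E t) (t : ℕ) :
    E t = conjDiag U (1 - (1 - lam) ^ t) * Y - Y := by
  induction t with
  | zero => simp [h0]
  | succ t ih =>
    set a := 1 - (1 - lam) ^ t
    have hcoef : 1 - (1 - lam) ^ (t + 1) = a - lam * a + lam := by ring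
    rw [hstep, ih, hcoef, Matrix.mul_sub, ← Matrix.mul_assoc, conjDiag_mul_conjDiag hU,
      map_add, map_sub (conjDiag U) a, Matrix.add_mul, Matrix.sub_mul]
    abel

theorem gradientDescent_residual_eq {p c : Type*} [Fintype p] {U : Matrix m k R}
    {V : Matrix p k R} {F : Matrix m p R} {s : k → R} (hF : F = U * diagonal s * Vᵀ)
    (hU : Uᵀ * U = 1) (hV : Vᵀ * V = 1) (a : R) (Y : Matrix m c R) {W : ℕ → Matrix p c R}
    (h0 : W 0 = 0) (hrec : ∀ t, W (t + 1) = W t - a • (Fᵀ * (F * W t - Y))) (t : ℕ) :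
    F * W t - Y = conjDiag U (1 - (1 - a • s ^ 2) ^ t) * Y - Y := by
  refine residual_eq_conjDiag hU _ Y (E := fun t => F * W t - Y) (by simp [h0]) (fun t => ?_) t
  rw [hrec, map_smul, ← mul_transpose_eq_conjDiag hF hV, Matrix.mul_sub, Matrix.mul_smul,
    Matrix.smul_mul, Matrix.mul_assoc]
  abel

end ConjDiag

theorem frobNorm_conjDiag_mul_le {m k c : Type*} [Fintype m] [Fintype k] [DecidableEq k]
    [Fintype c] {U : Matrix m k ℝ} (hU : Uᵀ * U = 1) {g : k → ℝ} {b : ℝ} (hb : 0 ≤ b)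
    (hg : ∀ i, |g i| ≤ b) (Y : Matrix m c ℝ) :
    frobNorm (conjDiag U g * Y) ≤ b * frobNorm Y := by
  classical
  have hUUt : IsIdempotentElem (U * Uᵀ) := by
    rw [IsIdempotentElem, Matrix.mul_assoc, ← Matrix.mul_assoc Uᵀ, hU, Matrix.one_mul]
  calc frobNorm (conjDiag U g * Y) = frobNorm (diagonal g * (Uᵀ * Y)) := by
        rw [conjDiag_apply, Matrix.mul_assoc, Matrix.mul_assoc,
          frobNorm_mul_of_transpose_mul_self_eq_one hU]
    _ ≤ b * frobNorm (Uᵀ * Y) := frobNorm_diagonal_mul_le hb hg _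
    _ = b * frobNorm (U * Uᵀ * Y) := by
        rw [Matrix.mul_assoc, frobNorm_mul_of_transpose_mul_self_eq_one hU]
    _ ≤ b * frobNorm Y := by
        gcongr
        exact frobNorm_mul_le_of_isSymm_of_isIdempotentElem (by simp [IsSymm]) hUUt Y

theorem topColsProj_eq_conjDiag {n d : ℕ} (U : Matrix (Fin n) (Fin d) ℝ) (r : ℕ) :
    topColsProj U r = conjDiag U (fun k => if (k : ℕ) < r then 1 else 0) := by
  ext i j
  rw [conjDiag_apply, mul_apply]
  simp only [topColsProj, of_apply, mul_diagonal, transpose_apply]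
  refine Finset.sum_congr rfl fun k _ => ?_
  split_ifs <;> simp

theorem mul_le_one_of_le_one_div {η x : ℝ} (hη : 0 < η) (h : η ≤ 1 / x) : η * x ≤ 1 := by
  rcases le_or_gt x 0 with hx | hx
  · exact (mul_nonpos_of_nonneg_of_nonpos hη.le hx).trans zero_le_one
  · exact (le_div_iff₀ hx).1 h

theorem abs_one_sub_mul_le_of_antitone {lam : ℕ → ℝ} (hlam : Antitone lam) {η : ℝ}
    (hη : 0 < η) (hη1 : η ≤ 1 / lam 0) {i j : ℕ} (hij : i ≤ j) :
    |1 - η * lam i| ≤ 1 - η * lam j := by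
  have h0 := mul_le_one_of_le_one_div hη hη1
  have hji := mul_le_mul_of_nonneg_left (hlam hij) hη.le
  have hi0 := mul_le_mul_of_nonneg_left (hlam (Nat.zero_le i)) hη.le
  exact abs_le.2 ⟨by linarith, by linarith⟩

theorem training_residual_bound_general {n d C : ℕ}
    (F U : Matrix (Fin n) (Fin d) ℝ) (V : Matrix (Fin d) (Fin d) ℝ)
    (σ : ℕ → ℝ) (r : ℕ) (Y : Matrix (Fin n) (Fin C) ℝ)
    (hSVD : F = U * Matrix.diagonal (fun j : Fin d => σ (j : ℕ)) * Vᵀ)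
    (hU : Uᵀ * U = 1)
    (hV1 : Vᵀ * V = 1)
    (hmono : ∀ i j : ℕ, i ≤ j → σ j ≤ σ i)
    (hnonneg : ∀ i : ℕ, 0 ≤ σ i)
    (hzero : ∀ i : ℕ, r ≤ i → σ i = 0)
    (η : ℝ) (hη0 : 0 < η) (hη1 : η ≤ 1 / (σ 0 ^ 2 / (n : ℝ)))
    (W : ℕ → Matrix (Fin d) (Fin C) ℝ)
    (hW0 : W 0 = 0)
    (hrec : ∀ t : ℕ, W (t + 1) = W t - (η / (n : ℝ)) • (Fᵀ * (F * W t - Y))) :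
    ∀ t : ℕ,
      frobNorm (F * W t - Y) ≤
        frobNorm (Y - topColsProj U r * Y) +
          (1 - η * (σ (r - 1) ^ 2 / (n : ℝ))) ^ t * frobNorm Y := by
  intro t
  have hanti : Antitone fun i => σ i ^ 2 / (n : ℝ) := fun i j hij => by
    have := hmono i j hij
    have := hnonneg j
    dsimp only
    gcongr
  have hβ : 0 ≤ 1 - η * (σ (r - 1) ^ 2 / n) :=
    (abs_nonneg _).trans (abs_one_sub_mul_le_of_antitone hanti hη0 hη1 le_rfl)
  set g : Fin d → ℝ := fun k => if (k : ℕ) < r then (1 - η * (σ k ^ 2 / n)) ^ t else 0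
  have hsplit : 1 - (1 - (η / n) • (fun k : Fin d => σ k) ^ 2) ^ t =
      (fun k : Fin d => if (k : ℕ) < r then 1 else 0) - g := by
    funext k
    by_cases hk : (k : ℕ) < r
    · simp [g, hk, div_mul_eq_mul_div, mul_div_assoc]
    · simp [g, hk, hzero k (not_lt.1 hk)]
  have hg : ∀ k, |g k| ≤ (1 - η * (σ (r - 1) ^ 2 / n)) ^ t := fun k => by
    by_cases hk : (k : ℕ) < r
    · simpa [g, hk, abs_pow] using pow_le_pow_left₀ (abs_nonneg _)
        (abs_one_sub_mul_le_of_antitone hanti hη0 hη1 (by omega)) t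
    · simpa [g, hk] using pow_nonneg hβ t
  calc frobNorm (F * W t - Y)
      = frobNorm (-(Y - topColsProj U r * Y) - conjDiag U g * Y) := by
        rw [gradientDescent_residual_eq hSVD hU hV1 _ Y hW0 hrec, hsplit, map_sub,
          Matrix.sub_mul, topColsProj_eq_conjDiag]
        congr 1
        abel
    _ ≤ _ := frobNorm_neg_sub_le _ _
    _ ≤ _ := by
        gcongr
        exact frobNorm_conjDiag_mul_le hU (pow_nonneg hβ t) hg Y

/-- if `W⁽⁰⁾ = 0`, `0 < η ≤ 1/λ̂₁`, and
`W⁽ᵗ⁾ = W⁽ᵗ⁻¹⁾ - (η/n) Fᵀ (F W⁽ᵗ⁻¹⁾ - Y)` for all `t ≥ 1`, then for every `t ≥ 0`,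
`‖F W⁽ᵗ⁾ - Y‖_F ≤ ‖Y - Ȳ‖_F + (1 - η λ̂_r)ᵗ ‖Y‖_F`, where `Ȳ = U^r (U^r)ᵀ Y`, and
`λ̂₁ = σ(0)²/n`, `λ̂_r = σ(r-1)²/n` (0-indexed `σ`) are the largest and smallest positive
eigenvalues of `K_n = (1/n) F Fᵀ`. -/
theorem training_residual_bound {n d C : ℕ} (hn : 0 < n)
    (F U : Matrix (Fin n) (Fin d) ℝ) (V : Matrix (Fin d) (Fin d) ℝ)
    (σ : ℕ → ℝ) (r : ℕ) (Y : Matrix (Fin n) (Fin C) ℝ)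
    (hSVD : F = U * Matrix.diagonal (fun j : Fin d => σ (j : ℕ)) * Vᵀ)
    (hU : Uᵀ * U = 1)
    (hV1 : Vᵀ * V = 1) (hV2 : V * Vᵀ = 1)
    (hmono : ∀ i j : ℕ, i ≤ j → σ j ≤ σ i)
    (hnonneg : ∀ i : ℕ, 0 ≤ σ i)
    (hr1 : 1 ≤ r) (hr : r ≤ min n d) (hrank : F.rank = r)
    (hpos : ∀ i : ℕ, i < r → 0 < σ i) (hzero : ∀ i : ℕ, r ≤ i → σ i = 0)
    (η : ℝ) (hη0 : 0 < η) (hη1 : η ≤ 1 / (σ 0 ^ 2 / (n : ℝ)))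
    (W : ℕ → Matrix (Fin d) (Fin C) ℝ)
    (hW0 : W 0 = 0)
    (hrec : ∀ t : ℕ, W (t + 1) = W t - (η / (n : ℝ)) • (Fᵀ * (F * W t - Y))) :
    ∀ t : ℕ,
      frobNorm (F * W t - Y) ≤
        frobNorm (Y - topColsProj U r * Y) +
          (1 - η * (σ (r - 1) ^ 2 / (n : ℝ))) ^ t * frobNorm Y :=
  training_residual_bound_general F U V σ r Y hSVD hU hV1 hmono hnonneg hzero η hη0 hη1 W hW0 hrec
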